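/- For any input distribution Q_X, channel Q_{Y|X}, rate R, any n ∈ ℕ, and any δ ∈ (0, R − I(X;Y)), the probability (over the random i.i.d. codebook 𝒞 of size 2^{nR}) that ‖P_{Y^n|𝒞} − Q_{Y^n}‖_TV exceeds 3·2^{−n γ_δ} is at most (1 + |𝒴|^n) e^{−(1/3) 2^{nδ}}, where γ_δ = sup_{α > 1} ((α − 1)/(2α − 1)) (R − δ − d_α(Q_{X,Y}, Q_X Q_Y)). -/

import Mathlib

open Finset Real
open scoped BigOperators Classical

noncomputable section SoftCovering

/-- `p` is a probability mass function on the finite type `α`. -/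
def IsPMF {α : Type*} [Fintype α] (p : α → ℝ) : Prop :=
  (∀ a, 0 ≤ p a) ∧ ∑ a, p a = 1

variable {𝒳 𝒴 : Type*} [Fintype 𝒳] [Fintype 𝒴]

/-- The output distribution `Q_Y` on `𝒴` induced by the input distribution `Q_X`
and the channel `Q_{Y|X}`. -/
def outDist (QX : 𝒳 → ℝ) (QYX : 𝒳 → 𝒴 → ℝ) (y : 𝒴) : ℝ := ∑ x, QX x * QYX x y

/-- The `n`-fold i.i.d. product of a distribution `p`. -/
def prodDist {α : Type*} [Fintype α] (p : α → ℝ) (n : ℕ) (xs : Fin n → α) : ℝ :=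
  ∏ i, p (xs i)

/-- The `n`-fold memoryless channel: `Q_{Y^n|X^n = xs}(ys)`. -/
def chanProd (QYX : 𝒳 → 𝒴 → ℝ) (n : ℕ) (xs : Fin n → 𝒳) (ys : Fin n → 𝒴) : ℝ :=
  ∏ i, QYX (xs i) (ys i)

/-- The information density `ı_{X;Y}(x;y) = log₂ (Q_{Y|X}(y|x) / Q_Y(y))`, in bits. -/
def infoDensity (QX : 𝒳 → ℝ) (QYX : 𝒳 → 𝒴 → ℝ) (x : 𝒳) (y : 𝒴) : ℝ :=
  Real.logb 2 (QYX x y / outDist QX QYX y)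

/-- The mutual information `I(X;Y)` of `(X,Y) ~ Q_X Q_{Y|X}`, in bits. -/
def mutualInfo (QX : 𝒳 → ℝ) (QYX : 𝒳 → 𝒴 → ℝ) : ℝ :=
  ∑ x, ∑ y, QX x * QYX x y * infoDensity QX QYX x y

/-- The variance `V` of the information density under `(X,Y) ~ Q_X Q_{Y|X}`. -/
def infoVar (QX : 𝒳 → ℝ) (QYX : 𝒳 → 𝒴 → ℝ) : ℝ :=
  ∑ x, ∑ y, QX x * QYX x y * (infoDensity QX QYX x y - mutualInfo QX QYX) ^ 2

/-- The centered third absolute moment `ρ` of the information density. -/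
def infoThird (QX : 𝒳 → ℝ) (QYX : 𝒳 → 𝒴 → ℝ) : ℝ :=
  ∑ x, ∑ y, QX x * QYX x y * |infoDensity QX QYX x y - mutualInfo QX QYX| ^ 3

/-- The Rényi divergence of order `a` between `Q_{X,Y} = Q_X Q_{Y|X}` and the product
of its marginals `Q_X Q_Y`, in bits. -/
def renyiDiv (QX : 𝒳 → ℝ) (QYX : 𝒳 → 𝒴 → ℝ) (a : ℝ) : ℝ :=
  (a - 1)⁻¹ * Real.logb 2 (∑ x, ∑ y,
    (QX x * QYX x y) ^ a * (QX x * outDist QX QYX y) ^ (1 - a))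

/-- Membership in the jointly typical set
`𝒜_ε = {(x^n,y^n) : (1/n) log₂ (Q_{Y^n|X^n=x^n}(y^n)/Q_{Y^n}(y^n)) ≤ I(X;Y) + ε}`. -/
def JTypical (QX : 𝒳 → ℝ) (QYX : 𝒳 → 𝒴 → ℝ) (n : ℕ) (ε : ℝ)
    (xs : Fin n → 𝒳) (ys : Fin n → 𝒴) : Prop :=
  (n : ℝ)⁻¹ * Real.logb 2 (chanProd QYX n xs ys / prodDist (outDist QX QYX) n ys)
    ≤ mutualInfo QX QYX + ε

/-- The probability that `(X^n, Y^n) ~ Q_{X^n} Q_{Y^n|X^n}` is outside `𝒜_ε`. -/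
def atypProb (QX : 𝒳 → ℝ) (QYX : 𝒳 → 𝒴 → ℝ) (n : ℕ) (ε : ℝ) : ℝ :=
  ∑ xs : Fin n → 𝒳, ∑ ys : Fin n → 𝒴,
    if ¬ JTypical QX QYX n ε xs ys then prodDist QX n xs * chanProd QYX n xs ys else 0

/-- The induced output distribution `P_{Y^n|C} = 2^{-nR} ∑_m Q_{Y^n|X^n = x^n(m)}`
of a codebook `C` of size `M = 2^{nR}` (so `2^{-nR} = 1/M`). -/
def inducedDist (QYX : 𝒳 → 𝒴 → ℝ) (n M : ℕ) (C : Fin M → Fin n → 𝒳)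
    (ys : Fin n → 𝒴) : ℝ :=
  (M : ℝ)⁻¹ * ∑ m, chanProd QYX n (C m) ys

/-- The typical part `P_{C,1}(y^n) = 2^{-nR} ∑_m Q_{Y^n|X^n=x^n(m)}(y^n) 1{(x^n(m),y^n) ∈ 𝒜_ε}`. -/
def Ptyp (QX : 𝒳 → ℝ) (QYX : 𝒳 → 𝒴 → ℝ) (n M : ℕ) (ε : ℝ)
    (C : Fin M → Fin n → 𝒳) (ys : Fin n → 𝒴) : ℝ :=
  (M : ℝ)⁻¹ * ∑ m, if JTypical QX QYX n ε (C m) ys then chanProd QYX n (C m) ys else 0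

/-- The atypical part `P_{C,2}(y^n) = 2^{-nR} ∑_m Q_{Y^n|X^n=x^n(m)}(y^n) 1{(x^n(m),y^n) ∉ 𝒜_ε}`. -/
def Patyp (QX : 𝒳 → ℝ) (QYX : 𝒳 → 𝒴 → ℝ) (n M : ℕ) (ε : ℝ)
    (C : Fin M → Fin n → 𝒳) (ys : Fin n → 𝒴) : ℝ :=
  (M : ℝ)⁻¹ * ∑ m, if ¬ JTypical QX QYX n ε (C m) ys then chanProd QYX n (C m) ys else 0

/-- The density `D_{C,1}(y^n) = P_{C,1}(y^n)/Q_{Y^n}(y^n)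
= 2^{-nR} ∑_m (Q_{Y^n|X^n=x^n(m)}(y^n)/Q_{Y^n}(y^n)) 1{(x^n(m),y^n) ∈ 𝒜_ε}`. -/
def Dtyp (QX : 𝒳 → ℝ) (QYX : 𝒳 → 𝒴 → ℝ) (n M : ℕ) (ε : ℝ)
    (C : Fin M → Fin n → 𝒳) (ys : Fin n → 𝒴) : ℝ :=
  (M : ℝ)⁻¹ * ∑ m, if JTypical QX QYX n ε (C m) ys then
    chanProd QYX n (C m) ys / prodDist (outDist QX QYX) n ys else 0

/-- Total variation distance `(1/2) ∑_y |P y - Q y|` on a finite type. -/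
def tvDist {β : Type*} [Fintype β] (P Q : β → ℝ) : ℝ := (1 / 2) * ∑ y, |P y - Q y|

/-- Probability of an event `E` over the random codebook of `M` codewords drawn
i.i.d. from `Q_{X^n}`. -/
def cbProb (QX : 𝒳 → ℝ) (n M : ℕ) (E : (Fin M → Fin n → 𝒳) → Prop) : ℝ :=
  ∑ C : Fin M → Fin n → 𝒳, if E C then ∏ m, prodDist QX n (C m) else 0

/-- `𝒬(x)`: one minus the standard normal cumulative distribution function. -/
def gaussQ (x : ℝ) : ℝ :=
  (Real.sqrt (2 * Real.pi))⁻¹ * ∫ t in Set.Ioi x, Real.exp (-(t ^ 2 / 2))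

/-- `𝒬⁻¹`, the inverse of `𝒬`. -/
def gaussQInv : ℝ → ℝ := Function.invFun gaussQ


/-!
Split `P_{Y^n|𝒞}` into the part `P_{𝒞,1}` carried by jointly typical pairs, i.e. pairs whose
information density is at most `n(R - δ - 2γ)`, and the atypical rest `P_{𝒞,2}`. If
`P_{𝒞,1} ≤ (1 + t) Q_{Y^n}` pointwise and `P_{𝒞,2}` has mass at most `2t`, the total variation
distance is at most `3t`. Both conditions fail only with small probability, by the
multiplicative Chernoff bound for sums of `M` i.i.d. bounded variables. For a fixed `y^n`, the
normalized typical channel probabilities are bounded by `2^{n(R-δ-2γ)}` and have mean at most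
`1`; with `t = 2^{-nγ}` this gives `exp(-2^{nδ}/3)`. The atypical mass has mean
`P[(X^n,Y^n) atypical] ≤ 2^{n(α-1)(d_α - (R-δ-2γ))}` (Markov's inequality applied to the
density ratio raised to the power `α - 1`), and this equals `t` exactly when
`γ = (α-1)/(2α-1) (R - δ - d_α)`. A union bound over the `|𝒴|^n` outputs and the atypical
event then gives the factor `1 + |𝒴|^n`. Since there are only finitely many codebooks, the
threshold at `γ_δ` may be replaced by the threshold at some `γ(α)` close to the supremum.
-/

lemma sum_pi_sum_pi_prod_eq_pow {α β : Type*} [Fintype α] [Fintype β] (g : α → β → ℝ) (n : ℕ) :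
    ∑ xs : Fin n → α, ∑ ys : Fin n → β, ∏ i, g (xs i) (ys i) = (∑ x, ∑ y, g x y) ^ n := by
  rw [Fintype.sum_pow]
  exact sum_congr rfl fun xs _ => (Fintype.prod_sum fun i y => g (xs i) y).symm

lemma isPMF_prodDist {α : Type*} [Fintype α] {p : α → ℝ} (hp : IsPMF p) (n : ℕ) :
    IsPMF (prodDist p n) :=
  ⟨fun _ => prod_nonneg fun _ _ => hp.1 _, by simp [prodDist, ← Fintype.sum_pow, hp.2]⟩

lemma isPMF_joint {α β : Type*} [Fintype α] [Fintype β] {p : α → ℝ} {k : α → β → ℝ}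
    (hp : IsPMF p) (hk : ∀ a, IsPMF (k a)) : IsPMF fun z : α × β => p z.1 * k z.1 z.2 :=
  ⟨fun z => mul_nonneg (hp.1 _) ((hk _).1 _), by
    simp [Fintype.sum_prod_type, ← mul_sum, (hk _).2, hp.2]⟩

lemma isPMF_chanProd {α β : Type*} [Fintype β] {K : α → β → ℝ} (hK : ∀ a, IsPMF (K a)) (n : ℕ)
    (xs : Fin n → α) : IsPMF (chanProd K n xs) :=
  ⟨fun _ => prod_nonneg fun _ _ => (hK _).1 _, by
    simp [chanProd, ← Fintype.prod_sum, (hK _).2]⟩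

section Channel

variable {QX : 𝒳 → ℝ} {QYX : 𝒳 → 𝒴 → ℝ}

lemma isPMF_outDist (hQX : IsPMF QX) (hQYX : ∀ x, IsPMF (QYX x)) : IsPMF (outDist QX QYX) := by
  refine ⟨fun y => sum_nonneg fun x _ => mul_nonneg (hQX.1 x) ((hQYX x).1 y), ?_⟩
  simp only [outDist]
  rw [sum_comm, ← Fintype.sum_prod_type']
  exact (isPMF_joint hQX hQYX).2

lemma mul_le_outDist (hQX : IsPMF QX) (hQYX : ∀ x, IsPMF (QYX x)) (x : 𝒳) (y : 𝒴) :
    QX x * QYX x y ≤ outDist QX QYX y :=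
  single_le_sum (f := fun x => QX x * QYX x y) (fun x _ => mul_nonneg (hQX.1 x) ((hQYX x).1 y))
    (mem_univ x)

lemma sum_prodDist_mul_chanProd (n : ℕ) (ys : Fin n → 𝒴) :
    ∑ xs, prodDist QX n xs * chanProd QYX n xs ys = prodDist (outDist QX QYX) n ys := by
  simp only [prodDist, chanProd, outDist, ← prod_mul_distrib]
  exact (Fintype.prod_sum fun i x => QX x * QYX x (ys i)).symm

lemma prodDist_mul_chanProd_le (hQX : IsPMF QX) (hQYX : ∀ x, IsPMF (QYX x)) {n : ℕ}
    (xs : Fin n → 𝒳) (ys : Fin n → 𝒴) :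
    prodDist QX n xs * chanProd QYX n xs ys ≤ prodDist (outDist QX QYX) n ys := by
  rw [← sum_prodDist_mul_chanProd]
  exact single_le_sum (f := fun xs => prodDist QX n xs * chanProd QYX n xs ys)
    (fun xs _ => mul_nonneg ((isPMF_prodDist hQX n).1 xs) ((isPMF_chanProd hQYX n xs).1 ys))
    (mem_univ xs)

end Channel

lemma mul_div_rpow_eq_rpow_mul_rpow {v q a : ℝ} (hv : 0 ≤ v) (hq : 0 ≤ q) (ha : a ≠ 1) :
    q * (v / q) ^ a = v ^ a * q ^ (1 - a) := by
  rcases hq.eq_or_lt with rfl | hq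
  · simp [Real.zero_rpow (sub_ne_zero.2 ha.symm)]
  · rw [Real.div_rpow hv hq.le, Real.rpow_sub hq, Real.rpow_one]
    field_simp

lemma one_le_sum_rpow_mul_rpow {ι : Type*} [Fintype ι] {p q : ι → ℝ} (hp : IsPMF p)
    (hq : IsPMF q) (hpq : ∀ i, q i = 0 → p i = 0) {a : ℝ} (ha : 1 < a) :
    1 ≤ ∑ i, p i ^ a * q i ^ (1 - a) := by
  have hmean : ∑ i, q i * (p i / q i) = 1 := by
    rw [← hp.2]
    refine sum_congr rfl fun i _ => ?_
    rcases eq_or_ne (q i) 0 with h | h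
    · simp [h, hpq i h]
    · field_simp
  have := Real.rpow_arith_mean_le_arith_mean_rpow univ q (fun i => p i / q i)
    (fun i _ => hq.1 i) hq.2 (fun i _ => div_nonneg (hp.1 i) (hq.1 i)) ha.le
  simpa [hmean, mul_div_rpow_eq_rpow_mul_rpow (hp.1 _) (hq.1 _) ha.ne'] using this

section Renyi

variable {QX : 𝒳 → ℝ} {QYX : 𝒳 → 𝒴 → ℝ}

lemma one_le_renyiSum (hQX : IsPMF QX) (hQYX : ∀ x, IsPMF (QYX x)) {a : ℝ} (ha : 1 < a) :
    1 ≤ ∑ x, ∑ y, (QX x * QYX x y) ^ a * (QX x * outDist QX QYX y) ^ (1 - a) := by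
  rw [← Fintype.sum_prod_type']
  refine one_le_sum_rpow_mul_rpow (isPMF_joint hQX hQYX)
    (isPMF_joint hQX fun _ => isPMF_outDist hQX hQYX) (fun ⟨x, y⟩ h => ?_) ha
  rcases mul_eq_zero.1 h with h | h
  · simp [h]
  · exact le_antisymm (h ▸ mul_le_outDist hQX hQYX x y)
      (mul_nonneg (hQX.1 x) ((hQYX x).1 y))

lemma renyiDiv_nonneg (hQX : IsPMF QX) (hQYX : ∀ x, IsPMF (QYX x)) {a : ℝ} (ha : 1 < a) :
    0 ≤ renyiDiv QX QYX a :=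
  mul_nonneg (inv_nonneg.2 (by linarith))
    (Real.logb_nonneg one_lt_two (one_le_renyiSum hQX hQYX ha))

lemma two_rpow_mul_renyiDiv (hQX : IsPMF QX) (hQYX : ∀ x, IsPMF (QYX x)) {a : ℝ} (ha : 1 < a) :
    (2 : ℝ) ^ ((a - 1) * renyiDiv QX QYX a)
      = ∑ x, ∑ y, (QX x * QYX x y) ^ a * (QX x * outDist QX QYX y) ^ (1 - a) := by
  rw [renyiDiv, ← mul_assoc, mul_inv_cancel₀ (by linarith), one_mul,
    Real.rpow_logb two_pos (by norm_num) (by linarith [one_le_renyiSum hQX hQYX ha])]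

end Renyi

lemma le_two_rpow_mul_rpow_mul_rpow {v q κ a : ℝ} (hv : 0 < v) (hq : 0 < q) (ha : 1 < a)
    (h : κ < Real.logb 2 (v / q)) : v ≤ 2 ^ (-((a - 1) * κ)) * (v ^ a * q ^ (1 - a)) := by
  have hr : (2 : ℝ) ^ κ < v / q := (Real.lt_logb_iff_rpow_lt one_lt_two (div_pos hv hq)).1 h
  have hpow : (2 : ℝ) ^ ((a - 1) * κ) ≤ (v / q) ^ (a - 1) := by
    rw [mul_comm, Real.rpow_mul zero_le_two]
    exact Real.rpow_le_rpow (by positivity) hr.le (by linarith)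
  calc v = 2 ^ (-((a - 1) * κ)) * (v * 2 ^ ((a - 1) * κ)) := by
        rw [mul_left_comm, ← Real.rpow_add two_pos, neg_add_cancel, Real.rpow_zero, mul_one]
    _ ≤ 2 ^ (-((a - 1) * κ)) * (v * (v / q) ^ (a - 1)) := by gcongr
    _ = 2 ^ (-((a - 1) * κ)) * (v ^ a * q ^ (1 - a)) := by
        rw [Real.rpow_sub_one (div_pos hv hq).ne',
          ← mul_div_rpow_eq_rpow_mul_rpow hv.le hq.le ha.ne']
        field_simp

section Typicality

variable {QX : 𝒳 → ℝ} {QYX : 𝒳 → 𝒴 → ℝ} {n : ℕ} {ε : ℝ}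

lemma jTypical_iff (hn : 0 < n) {xs : Fin n → 𝒳} {ys : Fin n → 𝒴} :
    JTypical QX QYX n ε xs ys ↔ Real.logb 2 (chanProd QYX n xs ys /
      prodDist (outDist QX QYX) n ys) ≤ n * (mutualInfo QX QYX + ε) :=
  inv_mul_le_iff₀ (by positivity)

lemma ite_not_jTypical_le (hQX : IsPMF QX) (hQYX : ∀ x, IsPMF (QYX x)) (hn : 0 < n) {a : ℝ}
    (ha : 1 < a) (xs : Fin n → 𝒳) (ys : Fin n → 𝒴) :
    (if ¬JTypical QX QYX n ε xs ys then prodDist QX n xs * chanProd QYX n xs ys else 0)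
      ≤ 2 ^ (-((a - 1) * (n * (mutualInfo QX QYX + ε)))) *
        ((prodDist QX n xs * chanProd QYX n xs ys) ^ a *
          (prodDist QX n xs * prodDist (outDist QX QYX) n ys) ^ (1 - a)) := by
  have hP := (isPMF_prodDist hQX n).1 xs
  have hW := (isPMF_chanProd hQYX n xs).1 ys
  have hQ := (isPMF_prodDist (isPMF_outDist hQX hQYX) n).1 ys
  have hrhs : 0 ≤ 2 ^ (-((a - 1) * (n * (mutualInfo QX QYX + ε)))) *
      ((prodDist QX n xs * chanProd QYX n xs ys) ^ a *
        (prodDist QX n xs * prodDist (outDist QX QYX) n ys) ^ (1 - a)) :=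
    mul_nonneg (by positivity) (mul_nonneg (Real.rpow_nonneg (mul_nonneg hP hW) _)
      (Real.rpow_nonneg (mul_nonneg hP hQ) _))
  split_ifs with htyp
  · exact hrhs
  rcases (mul_nonneg hP hW).eq_or_lt with h0 | hv
  · exact h0 ▸ hrhs
  have hPpos : 0 < prodDist QX n xs := pos_of_mul_pos_left hv hW
  have hQpos : 0 < prodDist (outDist QX QYX) n ys :=
    hv.trans_le (prodDist_mul_chanProd_le hQX hQYX xs ys)
  refine le_two_rpow_mul_rpow_mul_rpow hv (mul_pos hPpos hQpos) ha ?_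
  rw [mul_div_mul_left _ _ hPpos.ne']
  exact not_le.1 (mt (jTypical_iff hn).2 htyp)

lemma atypProb_le (hQX : IsPMF QX) (hQYX : ∀ x, IsPMF (QYX x)) (hn : 0 < n) {a : ℝ}
    (ha : 1 < a) (ε : ℝ) :
    atypProb QX QYX n ε
      ≤ 2 ^ ((n : ℝ) * (a - 1) * (renyiDiv QX QYX a - (mutualInfo QX QYX + ε))) := by
  set QY := outDist QX QYX
  set κ := (n : ℝ) * (mutualInfo QX QYX + ε) with hκ
  have htensor : ∀ xs ys, (prodDist QX n xs * chanProd QYX n xs ys) ^ a *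
      (prodDist QX n xs * prodDist QY n ys) ^ (1 - a)
        = ∏ i, (QX (xs i) * QYX (xs i) (ys i)) ^ a * (QX (xs i) * QY (ys i)) ^ (1 - a) := by
    intro xs ys
    simp only [prodDist, chanProd, ← prod_mul_distrib]
    rw [← Real.finsetProd_rpow _ _ (fun i _ => mul_nonneg (hQX.1 _) ((hQYX _).1 _)),
      ← Real.finsetProd_rpow _ _ (fun i _ => mul_nonneg (hQX.1 _)
        ((isPMF_outDist hQX hQYX).1 _)), ← prod_mul_distrib]
  calc atypProb QX QYX n ε
      ≤ ∑ xs, ∑ ys, 2 ^ (-((a - 1) * κ)) * ((prodDist QX n xs * chanProd QYX n xs ys) ^ a *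
          (prodDist QX n xs * prodDist QY n ys) ^ (1 - a)) :=
        sum_le_sum fun xs _ => sum_le_sum fun ys _ => ite_not_jTypical_le hQX hQYX hn ha xs ys
    _ = 2 ^ (-((a - 1) * κ)) * (2 ^ ((a - 1) * renyiDiv QX QYX a)) ^ n := by
        simp only [← mul_sum, htensor]
        rw [two_rpow_mul_renyiDiv hQX hQYX ha, ← sum_pi_sum_pi_prod_eq_pow]
    _ = 2 ^ ((n : ℝ) * (a - 1) * (renyiDiv QX QYX a - (mutualInfo QX QYX + ε))) := by
        rw [← Real.rpow_natCast, ← Real.rpow_mul zero_le_two, ← Real.rpow_add two_pos, hκ]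
        ring_nf

end Typicality

def iidProb {β : Type*} [Fintype β] (p : β → ℝ) (M : ℕ) (E : (Fin M → β) → Prop) : ℝ :=
  ∑ C : Fin M → β, if E C then ∏ m, p (C m) else 0

lemma cbProb_eq_iidProb (QX : 𝒳 → ℝ) (n M : ℕ) (E : (Fin M → Fin n → 𝒳) → Prop) :
    cbProb QX n M E = iidProb (prodDist QX n) M E :=
  rfl

lemma exp_le_one_add_add_sq {x : ℝ} (h0 : 0 ≤ x) (h1 : x ≤ 1) :
    Real.exp x ≤ 1 + x + 3 / 4 * x ^ 2 := by
  have h := Real.exp_bound (x := x) (by rwa [abs_of_nonneg h0]) (n := 2) two_pos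
  norm_num [sum_range_succ, Nat.factorial, abs_of_nonneg h0] at h
  linarith [(abs_le.1 h).2]

section IidProb

variable {β : Type*} [Fintype β] {p : β → ℝ} {M : ℕ}

lemma iidProb_mono (hp : ∀ x, 0 ≤ p x) {E F : (Fin M → β) → Prop} (h : ∀ C, E C → F C) :
    iidProb p M E ≤ iidProb p M F :=
  sum_le_sum fun C _ => by
    split_ifs with hE hF hF
    · exact le_rfl
    · exact absurd (h C hE) hF
    · exact prod_nonneg fun m _ => hp (C m)
    · exact le_rfl

lemma iidProb_le_sum (hp : ∀ x, 0 ≤ p x) {ι : Type*} [Fintype ι] {E : (Fin M → β) → Prop}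
    (F : ι → (Fin M → β) → Prop) (h : ∀ C, E C → ∃ i, F i C) :
    iidProb p M E ≤ ∑ i, iidProb p M (F i) := by
  simp only [iidProb]
  rw [sum_comm]
  refine sum_le_sum fun C _ => ?_
  have hw := prod_nonneg fun m (_ : m ∈ univ) => hp (C m)
  have hnonneg : ∀ i ∈ univ, 0 ≤ if F i C then ∏ m, p (C m) else 0 :=
    fun i _ => by split_ifs <;> simp [hw]
  split_ifs with hE
  · obtain ⟨i, hi⟩ := h C hE
    simpa [hi] using single_le_sum hnonneg (mem_univ i)
  · exact sum_nonneg hnonneg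

lemma iidProb_eq_zero {E : (Fin M → β) → Prop} (h : ∀ C, E C → ∃ m, p (C m) = 0) :
    iidProb p M E = 0 :=
  sum_eq_zero fun C _ => by
    split_ifs with hE
    · obtain ⟨m, hm⟩ := h C hE
      exact prod_eq_zero (mem_univ m) hm
    · rfl

variable {f : β → ℝ}

lemma iidProb_lt_sum_le_exp_mul_pow (hp : ∀ x, 0 ≤ p x) {s : ℝ} (hs : 0 ≤ s) (c : ℝ) :
    iidProb p M (fun C => c < ∑ m, f (C m))
      ≤ Real.exp (-(s * c)) * (∑ x, p x * Real.exp (s * f x)) ^ M := by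
  rw [iidProb, Fintype.sum_pow, mul_sum]
  refine sum_le_sum fun C _ => ?_
  have hw := prod_nonneg fun m (_ : m ∈ univ) => hp (C m)
  rw [prod_mul_distrib, ← Real.exp_sum, ← mul_sum, mul_left_comm, ← Real.exp_add]
  split_ifs with h
  · exact le_mul_of_one_le_right hw (Real.one_le_exp (by nlinarith))
  · positivity

lemma sum_mul_exp_le (hp : IsPMF p) {b : ℝ} (hb : 0 < b) (hf : ∀ x, f x ∈ Set.Icc 0 b)
    {μ s : ℝ} (hs : 0 ≤ s) (hmean : ∑ x, p x * f x ≤ μ) :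
    ∑ x, p x * Real.exp (s * f x) ≤ Real.exp (μ * ((Real.exp (s * b) - 1) / b)) := by
  have hchord : ∀ x, Real.exp (s * f x) ≤ 1 + f x * ((Real.exp (s * b) - 1) / b) := by
    intro x
    have hθ0 : 0 ≤ f x / b := div_nonneg (hf x).1 hb.le
    have hθ1 : f x / b ≤ 1 := (div_le_one hb).2 (hf x).2
    have h := convexOn_exp.2 (Set.mem_univ 0) (Set.mem_univ (s * b)) (sub_nonneg.2 hθ1) hθ0
      (sub_add_cancel 1 _)
    simp only [smul_eq_mul, mul_zero, zero_add, Real.exp_zero, mul_one] at h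
    rw [show f x / b * (s * b) = s * f x by field_simp] at h
    linarith [show f x * ((Real.exp (s * b) - 1) / b) = f x / b * (Real.exp (s * b) - 1) by ring]
  have hE : 0 ≤ (Real.exp (s * b) - 1) / b :=
    div_nonneg (sub_nonneg.2 (Real.one_le_exp (by positivity))) hb.le
  calc ∑ x, p x * Real.exp (s * f x)
      ≤ ∑ x, p x * (1 + f x * ((Real.exp (s * b) - 1) / b)) :=
        sum_le_sum fun x _ => mul_le_mul_of_nonneg_left (hchord x) (hp.1 x)
    _ = 1 + (∑ x, p x * f x) * ((Real.exp (s * b) - 1) / b) := by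
        simp only [mul_add, mul_one, sum_add_distrib, hp.2, sum_mul, mul_assoc]
    _ ≤ 1 + μ * ((Real.exp (s * b) - 1) / b) := by gcongr
    _ ≤ Real.exp (μ * ((Real.exp (s * b) - 1) / b)) := by
        linarith [Real.add_one_le_exp (μ * ((Real.exp (s * b) - 1) / b))]

theorem iidProb_sum_gt_le (hp : IsPMF p) {b : ℝ} (hb : 0 < b) (hf : ∀ x, f x ∈ Set.Icc 0 b)
    {μ : ℝ} (hmean : ∑ x, p x * f x ≤ μ) {t : ℝ} (ht : t ∈ Set.Icc 0 1) :
    iidProb p M (fun C => (1 + t) * (M * μ) < ∑ m, f (C m))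
      ≤ Real.exp (-(t ^ 2 * (M * μ) / (3 * b))) := by
  have hμ : 0 ≤ μ := (sum_nonneg fun x _ => mul_nonneg (hp.1 x) (hf x).1).trans hmean
  -- with `s b = 2t/3`, the bound `exp x ≤ 1 + x + 3x²/4` leaves exactly `-t²/3` in the exponent
  set s := 2 * t / (3 * b) with hs
  have hsb : s * b = 2 * t / 3 := by rw [hs]; field_simp
  have hquad : Real.exp (2 * t / 3) - 1 - 2 * t / 3 * (1 + t) ≤ -(t ^ 2 / 3) := by
    nlinarith [exp_le_one_add_add_sq (x := 2 * t / 3) (by linarith [ht.1]) (by linarith [ht.2])]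
  calc iidProb p M (fun C => (1 + t) * (M * μ) < ∑ m, f (C m))
      ≤ Real.exp (-(s * ((1 + t) * (M * μ)))) * (∑ x, p x * Real.exp (s * f x)) ^ M :=
        iidProb_lt_sum_le_exp_mul_pow hp.1 (by positivity [ht.1]) _
    _ ≤ Real.exp (-(s * ((1 + t) * (M * μ)))) *
          Real.exp (μ * ((Real.exp (s * b) - 1) / b)) ^ M := by
        refine mul_le_mul_of_nonneg_left (pow_le_pow_left₀ ?_ ?_ M) (Real.exp_nonneg _)
        · exact sum_nonneg fun x _ => mul_nonneg (hp.1 x) (Real.exp_nonneg _)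
        · exact sum_mul_exp_le hp hb hf (by positivity [ht.1]) hmean
    _ = Real.exp (M * μ / b * (Real.exp (2 * t / 3) - 1 - 2 * t / 3 * (1 + t))) := by
        rw [← Real.exp_nat_mul, ← Real.exp_add, hsb, hs]
        congr 1
        field_simp
        ring
    _ ≤ Real.exp (-(t ^ 2 * (M * μ) / (3 * b))) := by
        rw [Real.exp_le_exp]
        calc M * μ / b * (Real.exp (2 * t / 3) - 1 - 2 * t / 3 * (1 + t))
            ≤ M * μ / b * -(t ^ 2 / 3) := by gcongr
          _ = -(t ^ 2 * (M * μ) / (3 * b)) := by ring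

end IidProb

lemma tvDist_le_sum_of_sub_le {β : Type*} [Fintype β] {P Q g : β → ℝ}
    (hPQ : ∑ y, P y = ∑ y, Q y) (hg0 : ∀ y, 0 ≤ g y) (hg : ∀ y, P y - Q y ≤ g y) :
    tvDist P Q ≤ ∑ y, g y := by
  have habs : ∀ y, |P y - Q y| ≤ 2 * g y - (P y - Q y) := fun y =>
    abs_le'.2 ⟨by linarith [hg y], by linarith [hg0 y]⟩
  calc tvDist P Q ≤ 1 / 2 * ∑ y, (2 * g y - (P y - Q y)) :=
        mul_le_mul_of_nonneg_left (sum_le_sum fun y _ => habs y) (by norm_num)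
    _ = ∑ y, g y := by
        rw [sum_sub_distrib, sum_sub_distrib, hPQ, ← mul_sum]
        ring

lemma tvDist_le_one {β : Type*} [Fintype β] {P Q : β → ℝ} (hP : IsPMF P) (hQ : IsPMF Q) :
    tvDist P Q ≤ 1 := by
  have habs : ∀ y, |P y - Q y| ≤ P y + Q y := fun y =>
    abs_sub_le_iff.2 ⟨by linarith [hQ.1 y], by linarith [hP.1 y]⟩
  calc tvDist P Q ≤ 1 / 2 * ∑ y, (P y + Q y) :=
        mul_le_mul_of_nonneg_left (sum_le_sum fun y _ => habs y) (by norm_num)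
    _ = 1 := by rw [sum_add_distrib, hP.2, hQ.2]; norm_num

lemma eventually_forall_lt_of_continuousAt {X ι : Type*} [TopologicalSpace X] [Finite ι]
    {h : X → ℝ} {x₀ : X} (hh : ContinuousAt h x₀) (g : ι → ℝ) :
    ∀ᶠ x in nhds x₀, ∀ i, h x₀ < g i → h x < g i := by
  refine Filter.eventually_all.2 fun i => ?_
  by_cases hi : h x₀ < g i
  · exact (hh.eventually (eventually_lt_nhds hi)).mono fun x hx _ => hx
  · exact Filter.Eventually.of_forall fun x h' => absurd h' hi

lemma isPMF_inducedDist {α β : Type*} [Fintype β] {K : α → β → ℝ} (hK : ∀ a, IsPMF (K a))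
    {n M : ℕ} (hM : 0 < M) (C : Fin M → Fin n → α) : IsPMF (inducedDist K n M C) := by
  refine ⟨fun ys => mul_nonneg (by positivity)
    (sum_nonneg fun m _ => (isPMF_chanProd hK n (C m)).1 ys), ?_⟩
  simp only [inducedDist, ← mul_sum]
  rw [sum_comm]
  simp [(isPMF_chanProd hK n _).2, hM.ne']

section OneShot

variable {QX : 𝒳 → ℝ} {QYX : 𝒳 → 𝒴 → ℝ} {n M : ℕ} {ε : ℝ}

lemma Ptyp_add_Patyp (C : Fin M → Fin n → 𝒳) (ys : Fin n → 𝒴) :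
    Ptyp QX QYX n M ε C ys + Patyp QX QYX n M ε C ys = inducedDist QYX n M C ys := by
  simp only [Ptyp, Patyp, inducedDist, ← mul_add, ← sum_add_distrib]
  congr 1
  exact sum_congr rfl fun m _ => by split_ifs <;> simp

lemma Patyp_nonneg (hQYX : ∀ x, IsPMF (QYX x)) (C : Fin M → Fin n → 𝒳) (ys : Fin n → 𝒴) :
    0 ≤ Patyp QX QYX n M ε C ys :=
  mul_nonneg (by positivity) (sum_nonneg fun m _ => by
    split_ifs <;> simp [(isPMF_chanProd hQYX n (C m)).1 ys])

lemma tvDist_inducedDist_le (hQX : IsPMF QX) (hQYX : ∀ x, IsPMF (QYX x)) (hM : 0 < M) {t : ℝ}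
    (ht : 0 ≤ t) (C : Fin M → Fin n → 𝒳)
    (htyp : ∀ ys, Ptyp QX QYX n M ε C ys ≤ (1 + t) * prodDist (outDist QX QYX) n ys)
    (hatyp : ∑ ys, Patyp QX QYX n M ε C ys ≤ 2 * t) :
    tvDist (inducedDist QYX n M C) (prodDist (outDist QX QYX) n) ≤ 3 * t := by
  have hQ := isPMF_prodDist (isPMF_outDist hQX hQYX) n
  calc tvDist (inducedDist QYX n M C) (prodDist (outDist QX QYX) n)
      ≤ ∑ ys, (t * prodDist (outDist QX QYX) n ys + Patyp QX QYX n M ε C ys) := by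
        refine tvDist_le_sum_of_sub_le (by rw [(isPMF_inducedDist hQYX hM C).2, hQ.2])
          (fun ys => add_nonneg (mul_nonneg ht (hQ.1 ys)) (Patyp_nonneg hQYX C ys)) fun ys => ?_
        rw [← Ptyp_add_Patyp (QX := QX) (ε := ε)]
        linarith [htyp ys]
    _ ≤ 3 * t := by
        rw [sum_add_distrib, ← mul_sum, hQ.2]
        linarith

lemma cbProb_sum_Patyp_gt_le (hQX : IsPMF QX) (hQYX : ∀ x, IsPMF (QYX x)) (hM : 0 < M)
    {t : ℝ} (hatyp : atypProb QX QYX n ε ≤ t) :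
    cbProb QX n M (fun C => 2 * t < ∑ ys, Patyp QX QYX n M ε C ys)
      ≤ Real.exp (-(M * t / 3)) := by
  set S : (Fin n → 𝒳) → ℝ := fun xs =>
    ∑ ys, if ¬JTypical QX QYX n ε xs ys then chanProd QYX n xs ys else 0
  have hsum : ∀ C, ∑ ys, Patyp QX QYX n M ε C ys = (M : ℝ)⁻¹ * ∑ m, S (C m) := fun C => by
    simp only [S, Patyp, ← mul_sum]
    rw [sum_comm]
  have hS : ∀ xs, S xs ∈ Set.Icc 0 1 := fun xs => by
    have hW := (isPMF_chanProd hQYX n xs).1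
    refine ⟨sum_nonneg fun ys _ => ?_, (sum_le_sum fun ys _ => ?_).trans_eq
      (isPMF_chanProd hQYX n xs).2⟩ <;> split_ifs <;> simp [hW ys]
  have hmean : ∑ xs, prodDist QX n xs * S xs ≤ t := by
    simpa only [S, atypProb, mul_sum, mul_ite, mul_zero] using hatyp
  calc cbProb QX n M (fun C => 2 * t < ∑ ys, Patyp QX QYX n M ε C ys)
      ≤ iidProb (prodDist QX n) M (fun C => (1 + 1) * (M * t) < ∑ m, S (C m)) := by
        refine iidProb_mono (isPMF_prodDist hQX n).1 fun C hC => ?_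
        rw [hsum, inv_mul_eq_div, lt_div_iff₀ (by positivity)] at hC
        linarith
    _ ≤ Real.exp (-(1 ^ 2 * (M * t) / (3 * 1))) :=
        iidProb_sum_gt_le (isPMF_prodDist hQX n) one_pos hS hmean ⟨zero_le_one, le_rfl⟩
    _ = Real.exp (-(M * t / 3)) := by ring_nf

lemma Ptyp_eq_Dtyp_mul {ys : Fin n → 𝒴} (hQ : prodDist (outDist QX QYX) n ys ≠ 0)
    (C : Fin M → Fin n → 𝒳) :
    Ptyp QX QYX n M ε C ys = Dtyp QX QYX n M ε C ys * prodDist (outDist QX QYX) n ys := by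
  simp only [Ptyp, Dtyp, mul_assoc, sum_mul]
  congr 1
  exact sum_congr rfl fun m _ => by split_ifs <;> simp [hQ]

lemma cbProb_Ptyp_pos_eq_zero (hQX : IsPMF QX) (hQYX : ∀ x, IsPMF (QYX x)) {ys : Fin n → 𝒴}
    (hQ : prodDist (outDist QX QYX) n ys = 0) :
    cbProb QX n M (fun C => 0 < Ptyp QX QYX n M ε C ys) = 0 :=
  iidProb_eq_zero fun C hC => by
    obtain ⟨m, hm⟩ : ∃ m, 0 < chanProd QYX n (C m) ys := by
      by_contra! h0
      exact hC.not_ge (mul_nonpos_of_nonneg_of_nonpos (by positivity)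
        (sum_nonpos fun m _ => by split_ifs <;> simp [h0 m]))
    have := hQ ▸ prodDist_mul_chanProd_le hQX hQYX (C m) ys
    exact ⟨m, le_antisymm (nonpos_of_mul_nonpos_left this hm) ((isPMF_prodDist hQX n).1 _)⟩

lemma cbProb_Dtyp_gt_le (hQX : IsPMF QX) (hQYX : ∀ x, IsPMF (QYX x)) (hn : 0 < n) (hM : 0 < M)
    {t : ℝ} (ht : t ∈ Set.Icc 0 1) {ys : Fin n → 𝒴} (hQ : 0 < prodDist (outDist QX QYX) n ys) :
    cbProb QX n M (fun C => 1 + t < Dtyp QX QYX n M ε C ys)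
      ≤ Real.exp (-(t ^ 2 * M / (3 * 2 ^ ((n : ℝ) * (mutualInfo QX QYX + ε))))) := by
  set Q := prodDist (outDist QX QYX) n ys
  set b := (2 : ℝ) ^ ((n : ℝ) * (mutualInfo QX QYX + ε))
  set W : (Fin n → 𝒳) → ℝ := fun xs =>
    if JTypical QX QYX n ε xs ys then chanProd QYX n xs ys / Q else 0
  have hratio : ∀ xs, 0 ≤ chanProd QYX n xs ys / Q :=
    fun xs => div_nonneg ((isPMF_chanProd hQYX n xs).1 ys) hQ.le
  have hW : ∀ xs, W xs ∈ Set.Icc 0 b := fun xs => by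
    simp only [W]
    split_ifs with htyp
    · refine ⟨hratio xs, ?_⟩
      rcases (hratio xs).eq_or_lt with h0 | hpos
      · exact h0 ▸ by positivity
      · exact (Real.logb_le_iff_le_rpow one_lt_two hpos).1 ((jTypical_iff hn).1 htyp)
    · exact ⟨le_rfl, by positivity⟩
  have hmean : ∑ xs, prodDist QX n xs * W xs ≤ 1 := calc
    ∑ xs, prodDist QX n xs * W xs ≤ ∑ xs, prodDist QX n xs * (chanProd QYX n xs ys / Q) :=
      sum_le_sum fun xs _ => mul_le_mul_of_nonneg_left
        (by simp only [W]; split_ifs <;> simp [hratio xs]) ((isPMF_prodDist hQX n).1 xs)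
    _ = 1 := by simp only [← mul_div_assoc, ← sum_div, sum_prodDist_mul_chanProd, Q,
        div_self hQ.ne']
  calc cbProb QX n M (fun C => 1 + t < Dtyp QX QYX n M ε C ys)
      ≤ iidProb (prodDist QX n) M (fun C => (1 + t) * (M * 1) < ∑ m, W (C m)) := by
        refine iidProb_mono (isPMF_prodDist hQX n).1 fun C hC => ?_
        rw [Dtyp, inv_mul_eq_div, lt_div_iff₀ (by positivity)] at hC
        linarith
    _ ≤ Real.exp (-(t ^ 2 * (M * 1) / (3 * b))) :=
        iidProb_sum_gt_le (isPMF_prodDist hQX n) (by positivity) hW hmean ht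
    _ = Real.exp (-(t ^ 2 * M / (3 * b))) := by rw [mul_one]

lemma cbProb_Ptyp_gt_le (hQX : IsPMF QX) (hQYX : ∀ x, IsPMF (QYX x)) (hn : 0 < n) (hM : 0 < M)
    {t : ℝ} (ht : t ∈ Set.Icc 0 1) (ys : Fin n → 𝒴) :
    cbProb QX n M (fun C => (1 + t) * prodDist (outDist QX QYX) n ys < Ptyp QX QYX n M ε C ys)
      ≤ Real.exp (-(t ^ 2 * M / (3 * 2 ^ ((n : ℝ) * (mutualInfo QX QYX + ε))))) := by
  rcases ((isPMF_prodDist (isPMF_outDist hQX hQYX) n).1 ys).eq_or_lt with hQ | hQ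
  · calc _ ≤ cbProb QX n M (fun C => 0 < Ptyp QX QYX n M ε C ys) :=
          iidProb_mono (isPMF_prodDist hQX n).1 fun C hC => by rwa [← hQ, mul_zero] at hC
      _ = 0 := cbProb_Ptyp_pos_eq_zero hQX hQYX hQ.symm
      _ ≤ _ := by positivity
  · refine le_trans (iidProb_mono (isPMF_prodDist hQX n).1 fun C hC => ?_)
      (cbProb_Dtyp_gt_le hQX hQYX hn hM ht hQ)
    rwa [Ptyp_eq_Dtyp_mul hQ.ne', mul_lt_mul_iff_left₀ hQ] at hC

theorem cbProb_tvDist_gt_le (hQX : IsPMF QX) (hQYX : ∀ x, IsPMF (QYX x)) (hn : 0 < n)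
    (hM : 0 < M) {t : ℝ} (ht : t ∈ Set.Icc 0 1)
    (htb : t ≤ 2 ^ ((n : ℝ) * (mutualInfo QX QYX + ε))) (hatyp : atypProb QX QYX n ε ≤ t) :
    cbProb QX n M
        (fun C => 3 * t < tvDist (inducedDist QYX n M C) (prodDist (outDist QX QYX) n))
      ≤ (1 + (Fintype.card 𝒴 : ℝ) ^ n) *
          Real.exp (-(t ^ 2 * M / (3 * 2 ^ ((n : ℝ) * (mutualInfo QX QYX + ε))))) := by
  set b := (2 : ℝ) ^ ((n : ℝ) * (mutualInfo QX QYX + ε))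
  have hatypE : Real.exp (-(M * t / 3)) ≤ Real.exp (-(t ^ 2 * M / (3 * b))) := by
    rw [Real.exp_le_exp, neg_le_neg_iff, div_le_div_iff₀ (by positivity) three_pos]
    have := mul_le_mul_of_nonneg_left htb (mul_nonneg (Nat.cast_nonneg M) ht.1)
    nlinarith
  calc cbProb QX n M
        (fun C => 3 * t < tvDist (inducedDist QYX n M C) (prodDist (outDist QX QYX) n))
      ≤ ∑ i : Option (Fin n → 𝒴), cbProb QX n M (fun C => i.elim
          (2 * t < ∑ ys, Patyp QX QYX n M ε C ys)
          fun ys => (1 + t) * prodDist (outDist QX QYX) n ys < Ptyp QX QYX n M ε C ys) := by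
        refine iidProb_le_sum (isPMF_prodDist hQX n).1 _ fun C hC => ?_
        by_contra! h
        exact hC.not_ge (tvDist_inducedDist_le hQX hQYX hM ht.1 C
          (fun ys => not_lt.1 (h (some ys))) (not_lt.1 (h none)))
    _ ≤ ∑ _i : Option (Fin n → 𝒴), Real.exp (-(t ^ 2 * M / (3 * b))) := by
        refine sum_le_sum fun i _ => ?_
        cases i with
        | none => exact (cbProb_sum_Patyp_gt_le hQX hQYX hM hatyp).trans hatypE
        | some ys => exact cbProb_Ptyp_gt_le hQX hQYX hn hM ht ys
    _ = (1 + (Fintype.card 𝒴 : ℝ) ^ n) * Real.exp (-(t ^ 2 * M / (3 * b))) := by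
        simp [add_comm]

end OneShot

theorem cbProb_tvDist_gt_le_of_renyiDiv {QX : 𝒳 → ℝ} {QYX : 𝒳 → 𝒴 → ℝ} (hQX : IsPMF QX)
    (hQYX : ∀ x, IsPMF (QYX x)) {R δ : ℝ} {n M : ℕ} (hn : 0 < n)
    (hM : (M : ℝ) = 2 ^ ((n : ℝ) * R)) {α γ : ℝ} (hα : 1 < α)
    (hγ : γ = (α - 1) / (2 * α - 1) * (R - δ - renyiDiv QX QYX α)) (hγ0 : 0 < γ) :
    cbProb QX n M (fun C =>
        3 * 2 ^ (-((n : ℝ) * γ)) < tvDist (inducedDist QYX n M C) (prodDist (outDist QX QYX) n))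
      ≤ (1 + (Fintype.card 𝒴 : ℝ) ^ n) * Real.exp (-(1 / 3) * 2 ^ ((n : ℝ) * δ)) := by
  set ε := R - δ - 2 * γ - mutualInfo QX QYX
  have hIε : mutualInfo QX QYX + ε = R - δ - 2 * γ := by ring
  have hγR : γ ≤ R - δ := by
    have hc : 0 < (α - 1) / (2 * α - 1) := div_pos (by linarith) (by linarith)
    have hc1 : (α - 1) / (2 * α - 1) < 1 := (div_lt_one (by linarith)).2 (by linarith)
    have hX : 0 < R - δ - renyiDiv QX QYX α := pos_of_mul_pos_right (hγ ▸ hγ0) hc.le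
    nlinarith [renyiDiv_nonneg hQX hQYX hα]
  have hatyp : atypProb QX QYX n ε ≤ 2 ^ (-((n : ℝ) * γ)) := by
    refine (atypProb_le hQX hQYX hn hα ε).trans_eq (congrArg _ ?_)
    have hγ' : γ * (2 * α - 1) = (α - 1) * (R - δ - renyiDiv QX QYX α) := by
      rw [hγ, mul_right_comm, div_mul_cancel₀ _ (by linarith)]
    rw [hIε]
    linear_combination (n : ℝ) * hγ'
  have hM0 : 0 < M := by exact_mod_cast hM ▸ (by positivity : (0 : ℝ) < 2 ^ ((n : ℝ) * R))
  have hexp : ((2 : ℝ) ^ (-((n : ℝ) * γ))) ^ 2 * M / 2 ^ ((n : ℝ) * (R - δ - 2 * γ))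
      = 2 ^ ((n : ℝ) * δ) := by
    rw [hM, ← Real.rpow_natCast, ← Real.rpow_mul zero_le_two, ← Real.rpow_add two_pos,
      ← Real.rpow_sub two_pos]
    congr 1
    push_cast
    ring
  refine (cbProb_tvDist_gt_le hQX hQYX hn hM0 ⟨by positivity, ?_⟩ ?_ hatyp).trans_eq ?_
  · exact Real.rpow_le_one_of_one_le_of_nonpos one_le_two (by nlinarith [hn])
  · rw [hIε]
    exact Real.rpow_le_rpow_of_exponent_le one_le_two (by nlinarith [hn])
  · rw [hIε, ← hexp]
    ring_nf

theorem soft_covering_precise_general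
    {𝒳 𝒴 : Type*} [Fintype 𝒳] [Fintype 𝒴]
    (QX : 𝒳 → ℝ) (QYX : 𝒳 → 𝒴 → ℝ) (hQX : IsPMF QX) (hQYX : ∀ x, IsPMF (QYX x))
    (R : ℝ) (n M : ℕ) (hM : (M : ℝ) = 2 ^ ((n : ℝ) * R))
    (δ : ℝ)
    (γδ : ℝ)
    (hγδ : γδ = ⨆ α : {a : ℝ // 1 < a},
      (((α : ℝ) - 1) / (2 * (α : ℝ) - 1)) * (R - δ - renyiDiv QX QYX (α : ℝ))) :
    cbProb QX n M (fun C =>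
        3 * 2 ^ (-((n : ℝ) * γδ)) <
          tvDist (inducedDist QYX n M C) (prodDist (outDist QX QYX) n))
      ≤ (1 + (Fintype.card 𝒴 : ℝ) ^ n) * Real.exp (-(1 / 3) * 2 ^ ((n : ℝ) * δ)) := by
  set TV := fun C : Fin M → Fin n → 𝒳 =>
    tvDist (inducedDist QYX n M C) (prodDist (outDist QX QYX) n)
  set thr := fun γ : ℝ => 3 * (2 : ℝ) ^ (-((n : ℝ) * γ))
  have hM0 : 0 < M := by exact_mod_cast hM ▸ (by positivity : (0 : ℝ) < 2 ^ ((n : ℝ) * R))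
  rcases le_or_gt ((n : ℝ) * γδ) 0 with hle | hpos
  · rw [cbProb_eq_iidProb, iidProb_eq_zero fun C hC => absurd hC ?_]
    · positivity
    have : 1 ≤ (2 : ℝ) ^ (-((n : ℝ) * γδ)) := Real.one_le_rpow one_le_two (by linarith)
    linarith [tvDist_le_one (isPMF_inducedDist hQYX hM0 C)
      (isPMF_prodDist (isPMF_outDist hQX hQYX) n)]
  obtain ⟨hn, hγδ0⟩ : 0 < (n : ℝ) ∧ 0 < γδ :=
    (pos_and_pos_or_neg_and_neg_of_mul_pos hpos).resolve_right fun h => h.1.not_ge n.cast_nonneg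
  have hcont : ContinuousAt thr γδ := by
    have := Real.continuous_const_rpow two_ne_zero
    fun_prop
  -- the finitely many values `TV C` above `thr γδ` stay above `thr γ'` for some `γ' < γδ`
  obtain ⟨γ', hγ'lt, hthr, hγ'0⟩ : ∃ γ' < γδ, (∀ C, thr γδ < TV C → thr γ' < TV C) ∧ 0 < γ' :=
    ((eventually_forall_lt_of_continuousAt hcont TV).and (lt_mem_nhds hγδ0)).exists_lt
  have : Nonempty {a : ℝ // 1 < a} := ⟨⟨2, one_lt_two⟩⟩
  obtain ⟨α, hα⟩ := exists_lt_of_lt_ciSup (hγδ ▸ hγ'lt)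
  calc cbProb QX n M (fun C => thr γδ < TV C)
      ≤ cbProb QX n M (fun C => thr ((α - 1) / (2 * α - 1) * (R - δ - renyiDiv QX QYX α)) < TV C) :=
        iidProb_mono (isPMF_prodDist hQX n).1 fun C hC =>
          lt_of_le_of_lt (by simp only [thr]; gcongr; norm_num) (hthr C hC)
    _ ≤ _ := cbProb_tvDist_gt_le_of_renyiDiv hQX hQYX (Nat.cast_pos.1 hn) hM α.2 rfl (hγ'0.trans hα)

/-- **Soft covering, precise one-shot form (Theorem 1, second part).**
For any `n` and any `δ ∈ (0, R − I(X;Y))`, the probability over the random codebook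
of size `M = 2^{nR}` that `‖P_{Y^n|𝒞} − Q_{Y^n}‖_TV > 3·2^{−nγ_δ}` is at most
`(1 + |𝒴|^n) e^{−(1/3) 2^{nδ}}`, where
`γ_δ = sup_{α>1} ((α−1)/(2α−1)) (R − δ − d_α(Q_{X,Y}, Q_X Q_Y))`. -/
theorem soft_covering_precise
    {𝒳 𝒴 : Type*} [Fintype 𝒳] [Fintype 𝒴]
    (QX : 𝒳 → ℝ) (QYX : 𝒳 → 𝒴 → ℝ) (hQX : IsPMF QX) (hQYX : ∀ x, IsPMF (QYX x))
    (R : ℝ) (n M : ℕ) (hM : (M : ℝ) = 2 ^ ((n : ℝ) * R))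
    (δ : ℝ) (hδ : δ ∈ Set.Ioo 0 (R - mutualInfo QX QYX))
    (γδ : ℝ)
    (hγδ : γδ = ⨆ α : {a : ℝ // 1 < a},
      (((α : ℝ) - 1) / (2 * (α : ℝ) - 1)) * (R - δ - renyiDiv QX QYX (α : ℝ))) :
    cbProb QX n M (fun C =>
        3 * 2 ^ (-((n : ℝ) * γδ)) <
          tvDist (inducedDist QYX n M C) (prodDist (outDist QX QYX) n))
      ≤ (1 + (Fintype.card 𝒴 : ℝ) ^ n) * Real.exp (-(1 / 3) * 2 ^ ((n : ℝ) * δ)) :=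
  soft_covering_precise_general QX QYX hQX hQYX R n M hM δ γδ hγδ
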